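/- arXiv:2103.13379 — 3 statements merged into one kernel-verified Lean document; each statement's English description precedes it below -/
import Mathlib

section
/- Let u be a bounded solution of the parabolic obstacle problem in B₁ × (−1,1) ⊂ ℝⁿ × ℝ, let (x_k, t_k) be singular points with x_k ≠ 0 converging to (0,0), and assume (0,0) is also a singular point. Assume furthermore that t_k ≥ −C′ |x_k|² for some constant C′ > 0. Then dist( x_k / |x_k| , {p_{2,0,0} = 0} ) → 0 as k → ∞, where {p_{2,0,0} = 0} = ker A_{0,0} is the zero set of the blow-up polynomial of u at (0,0). -/
open MeasureTheory Metric Set Filter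
open scoped ENNReal NNReal

noncomputable section

/-- The space-time domain `B₁ × (-1,1) ⊆ ℝⁿ × ℝ`. -/
def stefanDomain (n : ℕ) : Set (EuclideanSpace ℝ (Fin n) × ℝ) :=
  (ball (0 : EuclideanSpace ℝ (Fin n)) 1) ×ˢ (Ioo (-1 : ℝ) 1)

/-- Time derivative `∂ₜφ` of a space-time function. -/
def timeDeriv {n : ℕ} (φ : EuclideanSpace ℝ (Fin n) × ℝ → ℝ)
    (p : EuclideanSpace ℝ (Fin n) × ℝ) : ℝ :=
  deriv (fun t => φ (p.1, t)) p.2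

/-- Spatial Laplacian `Δφ` of a space-time function. -/
def spatialLap {n : ℕ} (φ : EuclideanSpace ℝ (Fin n) × ℝ → ℝ)
    (p : EuclideanSpace ℝ (Fin n) × ℝ) : ℝ :=
  ∑ i : Fin n,
    fderiv ℝ (fun x => fderiv ℝ (fun y => φ (y, p.2)) x (EuclideanSpace.single i (1 : ℝ)))
      p.1 (EuclideanSpace.single i (1 : ℝ))

/-- `u` is a (bounded) solution of the parabolic obstacle problem in `B₁ × (-1,1)`. -/
structure IsStefanSolution (n : ℕ) (u : EuclideanSpace ℝ (Fin n) × ℝ → ℝ) : Prop where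
  bounded : ∃ M : ℝ, ∀ p ∈ stefanDomain n, |u p| ≤ M
  contOn : ContinuousOn u (stefanDomain n)
  spatial_diff : ∀ p ∈ stefanDomain n, DifferentiableAt ℝ (fun x => u (x, p.2)) p.1
  grad_lip : ∀ K ⊆ stefanDomain n, IsCompact K → ∃ L : ℝ,
    ∀ p ∈ K, ∀ q ∈ K, p.2 = q.2 →
      ‖fderiv ℝ (fun x => u (x, p.2)) p.1 - fderiv ℝ (fun x => u (x, q.2)) q.1‖ ≤
        L * ‖p.1 - q.1‖
  time_lip : ∀ K ⊆ stefanDomain n, IsCompact K → ∃ L : ℝ,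
    ∀ p ∈ K, ∀ q ∈ K, p.1 = q.1 → |u p - u q| ≤ L * |p.2 - q.2|
  nonneg : ∀ p ∈ stefanDomain n, 0 ≤ u p
  mono_t : ∀ x t₁ t₂, (x, t₁) ∈ stefanDomain n → (x, t₂) ∈ stefanDomain n →
    t₁ ≤ t₂ → u (x, t₁) ≤ u (x, t₂)
  strictMono_pos : ∀ x t₁ t₂, (x, t₁) ∈ stefanDomain n → (x, t₂) ∈ stefanDomain n →
    t₁ < t₂ → 0 < u (x, t₁) → u (x, t₁) < u (x, t₂)
  weak_eq : ∀ φ : EuclideanSpace ℝ (Fin n) × ℝ → ℝ, ContDiff ℝ (⊤ : ℕ∞) φ →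
    HasCompactSupport φ → tsupport φ ⊆ stefanDomain n →
    ∫ p in stefanDomain n, u p * (spatialLap φ p + timeDeriv φ p) =
      ∫ p in stefanDomain n ∩ {p | 0 < u p}, φ p

/-- The quadratic polynomial `p₂(x) = ½ x·Ax` associated to a matrix `A`. -/
def quadPoly {n : ℕ} (A : Matrix (Fin n) (Fin n) ℝ) (x : EuclideanSpace ℝ (Fin n)) : ℝ :=
  (1 / 2) * ∑ i : Fin n, ∑ j : Fin n, A i j * x i * x j

/-- `A` is the blow-up matrix of `u` at the point `p₀`: `A` is symmetric, positive
semidefinite, of trace one, and `r⁻² u(x₀ + r x, t₀ + r² t) → ½ x·Ax` locally uniformly on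
`ℝⁿ × (-∞, 0]` as `r ↓ 0`. -/
def IsBlowupMatrix (n : ℕ) (u : EuclideanSpace ℝ (Fin n) × ℝ → ℝ)
    (p₀ : EuclideanSpace ℝ (Fin n) × ℝ) (A : Matrix (Fin n) (Fin n) ℝ) : Prop :=
  A.IsSymm ∧ A.PosSemidef ∧ A.trace = 1 ∧
  ∀ K : Set (EuclideanSpace ℝ (Fin n) × ℝ), IsCompact K → (∀ q ∈ K, q.2 ≤ 0) →
    ∀ ε : ℝ, 0 < ε → ∃ r₀ > 0, ∀ r : ℝ, 0 < r → r < r₀ → ∀ q ∈ K,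
      |u (p₀.1 + r • q.1, p₀.2 + r ^ 2 * q.2) / r ^ 2 - quadPoly A q.1| ≤ ε

/-- `p₀` is a singular point of `u`: it is a free boundary point at which the parabolic
blow-up of `u` is a nonnegative quadratic polynomial `½ x·Ax` with `tr A = 1`. -/
def IsSingularPoint (n : ℕ) (u : EuclideanSpace ℝ (Fin n) × ℝ → ℝ)
    (p₀ : EuclideanSpace ℝ (Fin n) × ℝ) : Prop :=
  p₀ ∈ stefanDomain n ∧
  p₀ ∈ frontier {p | p ∈ stefanDomain n ∧ 0 < u p} ∧
  ∃ A : Matrix (Fin n) (Fin n) ℝ, IsBlowupMatrix n u p₀ A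

/-- The singular set `Σ` of `u`. -/
def singularSet (n : ℕ) (u : EuclideanSpace ℝ (Fin n) × ℝ → ℝ) :
    Set (EuclideanSpace ℝ (Fin n) × ℝ) :=
  {p | IsSingularPoint n u p}

/-- `ParDimLE n E β`: the parabolic Hausdorff dimension of `E ⊆ ℝⁿ × ℝ` is at most `β`,
expressed through coverings by parabolic cylinders `B_{rᵢ}(xᵢ) × (tᵢ - rᵢ², tᵢ + rᵢ²)`. -/
def ParDimLE (n : ℕ) (E : Set (EuclideanSpace ℝ (Fin n) × ℝ)) (β : ℝ) : Prop :=
  ∀ β' : ℝ, β < β' → ∀ δ : ℝ, 0 < δ →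
    ∃ (c : ℕ → EuclideanSpace ℝ (Fin n)) (t r : ℕ → ℝ),
      (∀ i, 0 ≤ r i) ∧
      (E ⊆ ⋃ i, (ball (c i) (r i)) ×ˢ (Ioo (t i - r i ^ 2) (t i + r i ^ 2))) ∧
      ∑' i, ENNReal.ofReal (r i ^ β') ≤ ENNReal.ofReal δ


open scoped Topology

private lemma quadPoly_aux_nonneg {n : ℕ} (A : Matrix (Fin n) (Fin n) ℝ)
    (hA : A.PosSemidef) (y : Fin n → ℝ) :
    0 ≤ (1 / 2 : ℝ) * ∑ i, ∑ j, A i j * y i * y j := by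
  have h := hA.dotProduct_mulVec_nonneg y
  have hx' : dotProduct (star y) (A.mulVec y) = ∑ i, ∑ j, A i j * y i * y j := by
    simp only [star_trivial, dotProduct, Matrix.mulVec, Finset.mul_sum]
    exact Finset.sum_congr rfl fun i _ => Finset.sum_congr rfl fun j _ => by ring
  rw [hx'] at h
  linarith

/-- **Lemma.** Let `u` be a bounded solution of the parabolic obstacle problem, let
`(x_k,t_k)` be singular points with `x_k ≠ 0` converging to the singular point `(0,0)`,
and assume `t_k ≥ -C'|x_k|²`.  Then `dist(x_k/|x_k|, {p_{2,0,0} = 0}) → 0`, where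
`{p_{2,0,0} = 0} = ker A` is the zero set of the blow-up polynomial of `u` at `(0,0)`. -/
theorem singular_points_approach_kernel_of_blowup (n : ℕ) (hn : 1 ≤ n)
    (u : EuclideanSpace ℝ (Fin n) × ℝ → ℝ) (hu : IsStefanSolution n u)
    (h0 : IsSingularPoint n u (0, 0))
    (p : ℕ → EuclideanSpace ℝ (Fin n) × ℝ)
    (hp : ∀ k, IsSingularPoint n u (p k))
    (hx : ∀ k, (p k).1 ≠ 0)
    (hconv : Tendsto p atTop (nhds (0, 0)))
    (C' : ℝ) (hC' : 0 < C')
    (ht : ∀ k, -C' * ‖(p k).1‖ ^ 2 ≤ (p k).2)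
    (A : Matrix (Fin n) (Fin n) ℝ) (hA : IsBlowupMatrix n u (0, 0) A) :
    Tendsto (fun k => Metric.infDist (‖(p k).1‖⁻¹ • (p k).1)
        {x : EuclideanSpace ℝ (Fin n) | quadPoly A x = 0}) atTop (nhds 0) := by
  classical
  obtain ⟨hsymm, hpsd, htr, hblow⟩ := hA
  set Z : Set (EuclideanSpace ℝ (Fin n)) :=
    {x : EuclideanSpace ℝ (Fin n) | quadPoly A x = 0} with hZdef
  set e : ℕ → EuclideanSpace ℝ (Fin n) := fun k => ‖(p k).1‖⁻¹ • (p k).1 with he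
  have hne : ∀ k, ‖e k‖ = 1 := fun k => norm_smul_inv_norm (hx k)
  have hopen : IsOpen (stefanDomain n) := isOpen_ball.prod isOpen_Ioo
  -- `quadPoly A` is nonnegative
  have hqnn : ∀ x : EuclideanSpace ℝ (Fin n), 0 ≤ quadPoly A x := by
    intro x
    unfold quadPoly
    exact quadPoly_aux_nonneg A hpsd x
  -- `quadPoly A` is continuous
  have hcoord : ∀ i : Fin n, Continuous fun x : EuclideanSpace ℝ (Fin n) => x i :=
    fun i => (EuclideanSpace.proj (𝕜 := ℝ) i).continuous
  have hqc : Continuous (quadPoly A) := by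
    unfold quadPoly
    exact continuous_const.mul <| continuous_finset_sum _ fun i _ =>
      continuous_finset_sum _ fun j _ =>
        (continuous_const.mul (hcoord i)).mul (hcoord j)
  -- the spatial components tend to 0 in norm
  have hxk : Tendsto (fun k => ‖(p k).1‖) atTop (𝓝 0) := by
    have h1 : Tendsto (fun k => (p k).1) atTop
        (𝓝 (0 : EuclideanSpace ℝ (Fin n))) :=
      (continuous_fst.tendsto ((0 : EuclideanSpace ℝ (Fin n)), (0 : ℝ))).comp hconv
    simpa using h1.norm
  -- `u` vanishes at singular points
  have hu0 : ∀ q, IsSingularPoint n u q → u q = 0 := by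
    intro q hq
    obtain ⟨hdom, hfr, -⟩ := hq
    refine le_antisymm ?_ (hu.nonneg _ hdom)
    by_contra h
    push_neg at h
    have hct : ContinuousAt u q := hu.contOn.continuousAt (hopen.mem_nhds hdom)
    have h1 : ∀ᶠ q' in 𝓝 q, 0 < u q' := hct.eventually (eventually_gt_nhds h)
    have h2 : ∀ᶠ q' in 𝓝 q, q' ∈ stefanDomain n :=
      hopen.eventually_mem hdom
    have hint : q ∈ interior {p' | p' ∈ stefanDomain n ∧ 0 < u p'} := by
      rw [mem_interior_iff_mem_nhds]
      filter_upwards [h1, h2] with q' hq1 hq2 using ⟨hq2, hq1⟩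
    exact hfr.2 hint
  -- eventually `u ((p k).1, ‖(p k).1‖ ^ 2 * (-C')) = 0`
  have hzero : ∀ᶠ k in atTop, u ((p k).1, ‖(p k).1‖ ^ 2 * (-C')) = 0 := by
    have h2 : ∀ᶠ k in atTop, C' * ‖(p k).1‖ ^ 2 < 1 := by
      have h3 : Tendsto (fun k => C' * ‖(p k).1‖ ^ 2) atTop (𝓝 0) := by
        have := (hxk.pow 2).const_mul C'
        simpa using this
      exact h3.eventually (eventually_lt_nhds one_pos)
    filter_upwards [h2] with k hk
    obtain ⟨hdom, -, -⟩ := hp k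
    have hball : (p k).1 ∈ ball (0 : EuclideanSpace ℝ (Fin n)) 1 := hdom.1
    have ht2 : (p k).2 ∈ Ioo (-1 : ℝ) 1 := hdom.2
    have hsle : ‖(p k).1‖ ^ 2 * (-C') ≤ (p k).2 := by
      have := ht k; nlinarith
    have hmem : ((p k).1, ‖(p k).1‖ ^ 2 * (-C')) ∈ stefanDomain n := by
      refine ⟨hball, ?_, ?_⟩
      · simp only; nlinarith
      · simp only; nlinarith [sq_nonneg ‖(p k).1‖]
    have hmem' : ((p k).1, (p k).2) ∈ stefanDomain n := ⟨hball, ht2⟩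
    have hle := hu.mono_t (p k).1 _ _ hmem hmem' hsle
    have hpk0 : u ((p k).1, (p k).2) = 0 := by
      have := hu0 (p k) (hp k); simpa using this
    have hnn := hu.nonneg _ hmem
    linarith
  -- key: the distance is eventually small
  have key : ∀ ε : ℝ, 0 < ε → ∀ᶠ k in atTop, infDist (e k) Z < ε := by
    intro ε hε
    set Kε := sphere (0 : EuclideanSpace ℝ (Fin n)) 1 ∩ {x | ε ≤ infDist x Z} with hKε
    have hsub : ∀ k, infDist (e k) Z < ε ∨ e k ∈ Kε := by
      intro k
      by_cases hlt : infDist (e k) Z < ε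
      · exact Or.inl hlt
      · exact Or.inr ⟨by simpa [mem_sphere_zero_iff_norm] using hne k, le_of_not_gt hlt⟩
    by_cases hKne : Kε.Nonempty
    · have hKc : IsCompact Kε :=
        (isCompact_sphere 0 1).inter_right
          (isClosed_le continuous_const (continuous_infDist_pt Z))
      obtain ⟨x₀, hx₀, hmin⟩ := hKc.exists_isMinOn hKne hqc.continuousOn
      have hc : 0 < quadPoly A x₀ := by
        rcases (hqnn x₀).lt_or_eq with h | h
        · exact h
        · exfalso
          have hx₀Z : x₀ ∈ Z := h.symm
          have : infDist x₀ Z = 0 := infDist_zero_of_mem hx₀Z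
          have := hx₀.2
          rw [mem_setOf_eq] at this
          linarith
      set c := quadPoly A x₀ with hcdef
      obtain ⟨r₀, hr₀, hbump⟩ := hblow
        ((closedBall (0 : EuclideanSpace ℝ (Fin n)) 1) ×ˢ ({-C'} : Set ℝ))
        ((isCompact_closedBall _ _).prod isCompact_singleton)
        (by rintro ⟨a, b⟩ ⟨-, hb⟩; simp only [mem_singleton_iff] at hb
            simp only [hb]; linarith)
        (c / 2) (by positivity)
      have hsmall : ∀ᶠ k in atTop, ‖(p k).1‖ < r₀ :=
        hxk.eventually (eventually_lt_nhds hr₀)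
      filter_upwards [hsmall, hzero] with k hk hk0
      have hq : ((e k), (-C' : ℝ)) ∈
          (closedBall (0 : EuclideanSpace ℝ (Fin n)) 1) ×ˢ ({-C'} : Set ℝ) :=
        ⟨by simp [mem_closedBall_zero_iff, hne k], rfl⟩
      have hb := hbump ‖(p k).1‖ (norm_pos_iff.mpr (hx k)) hk ((e k), -C') hq
      have hsmul : ‖(p k).1‖ • (e k) = (p k).1 := by
        rw [he]
        simp only
        rw [smul_smul, mul_inv_cancel₀ (norm_ne_zero_iff.mpr (hx k)), one_smul]
      simp only [zero_add] at hb
      rw [hsmul] at hb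
      rw [hk0, zero_div, zero_sub, abs_neg] at hb
      have hlt : quadPoly A (e k) < c :=
        lt_of_le_of_lt (le_abs_self _) (by linarith)
      rcases hsub k with h | h
      · exact h
      · exact absurd (hmin h) (not_le.mpr hlt)
    · filter_upwards with k
      rcases hsub k with h | h
      · exact h
      · exact absurd ⟨e k, h⟩ hKne
  -- conclude
  rw [Metric.tendsto_atTop]
  intro ε hε
  obtain ⟨N, hN⟩ := eventually_atTop.mp (key ε hε)
  exact ⟨N, fun k hk => by
    rw [Real.dist_eq, sub_zero, abs_of_nonneg infDist_nonneg]
    exact hN k hk⟩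
end
end

section
/- Let E ⊂ ℝⁿ × ℝ and let m ≤ n be a nonnegative integer. Suppose that for every (x,t) ∈ E and every ε > 0 there exists ρ_{x,t,ε} > 0 such that, for all r ∈ (0, ρ_{x,t,ε}), one has π_x( E ∩ ( closedBall(x,r) × [t, ∞) ) ) ⊂ x + L + closedBall(0, rε) for some linear subspace L ⊂ ℝⁿ with dim L = m (L may depend on x, t, r, ε). Then the Hausdorff dimension of the spatial projection satisfies dim_H( π_x(E) ) ≤ m. -/
open Metric Set MeasureTheory Topology Filter
open scoped ENNReal NNReal Pointwise RealInnerProductSpace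

set_option maxHeartbeats 1000000

noncomputable section

namespace FutureFlatAux

variable {n : ℕ}

/-- **Cover step.** If every point of `E'` admits an `m`-plane tube (of width `2rε`) at
scale `2r` containing the spatial projection of its future, then the spatial projection of
`E'` intersected with any ball of radius `r` can be covered by a controlled number of balls
of radius `(m+4)εr`. -/
lemma coverStep (m : ℕ) (E' : Set (EuclideanSpace ℝ (Fin n) × ℝ)) (ε r : ℝ)
    (hε : 0 < ε) (hε1 : ε ≤ 1) (hr : 0 < r)
    (htube : ∀ p ∈ E', ∃ L : Submodule ℝ (EuclideanSpace ℝ (Fin n)),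
      Module.finrank ℝ L = m ∧
      Prod.fst '' (E' ∩ ((closedBall p.1 (2*r)) ×ˢ (Ici p.2))) ⊆
        ({p.1} : Set (EuclideanSpace ℝ (Fin n))) + (L : Set (EuclideanSpace ℝ (Fin n))) +
          closedBall (0 : EuclideanSpace ℝ (Fin n)) ((2*r)*ε))
    (z : EuclideanSpace ℝ (Fin n)) :
    ∃ G : Finset (EuclideanSpace ℝ (Fin n)),
      G.card ≤ (2*(⌈4/ε⌉₊+1)+1)^m ∧
      (Prod.fst '' E') ∩ closedBall z r ⊆
        ⋃ g ∈ G, closedBall g (((m:ℝ)+4)*ε*r) := by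
  classical
  by_cases hne : ((Prod.fst '' E') ∩ closedBall z r).Nonempty
  swap
  · refine ⟨∅, by simp, ?_⟩
    rw [not_nonempty_iff_eq_empty] at hne
    rw [hne]
    exact empty_subset _
  -- the set of witnesses over the ball
  set W : Set (EuclideanSpace ℝ (Fin n) × ℝ) :=
    {p | p ∈ E' ∧ p.1 ∈ closedBall z r} with hWdef
  have hWne : W.Nonempty := by
    obtain ⟨x, ⟨p, hpE, rfl⟩, hxball⟩ := hne
    exact ⟨p, hpE, hxball⟩
  -- a sequence of witnesses whose times are eventually below any witness time
  have hseq : ∃ u : ℕ → EuclideanSpace ℝ (Fin n) × ℝ, (∀ i, u i ∈ W) ∧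
      ∀ p ∈ W, ∀ᶠ i in Filter.atTop, (u i).2 ≤ p.2 := by
    by_cases hmin : ∃ p ∈ W, ∀ q ∈ W, p.2 ≤ q.2
    · obtain ⟨p, hpW, hp⟩ := hmin
      exact ⟨fun _ => p, fun _ => hpW,
        fun q hq => Filter.Eventually.of_forall fun i => hp q hq⟩
    · push_neg at hmin
      by_cases hbdd : BddBelow (Prod.snd '' W)
      · set β := sInf (Prod.snd '' W) with hβdef
        have hTne : (Prod.snd '' W).Nonempty := hWne.image _
        have hlt : ∀ i : ℕ, ∃ p, p ∈ W ∧ p.2 < β + 1/((i:ℝ)+1) := by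
          intro i
          have hβlt : β < β + 1/((i:ℝ)+1) := by
            have h0 : (0:ℝ) < 1/((i:ℝ)+1) := by positivity
            linarith
          obtain ⟨t, htT, htlt⟩ := exists_lt_of_csInf_lt hTne hβlt
          obtain ⟨p, hpW, rfl⟩ := htT
          exact ⟨p, hpW, htlt⟩
        choose u huW hu using hlt
        refine ⟨u, huW, ?_⟩
        intro p hpW
        have hβle : β ≤ p.2 := csInf_le hbdd ⟨p, hpW, rfl⟩
        have hβne : β ≠ p.2 := by
          intro hcon
          obtain ⟨q, hqW, hq⟩ := hmin p hpW
          have h1 : β ≤ q.2 := csInf_le hbdd ⟨q, hqW, rfl⟩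
          rw [hcon] at h1
          linarith
        have hβlt : β < p.2 := lt_of_le_of_ne hβle hβne
        obtain ⟨i₀, hi₀⟩ := exists_nat_one_div_lt (sub_pos.mpr hβlt)
        filter_upwards [Filter.eventually_ge_atTop i₀] with i hi
        have hmono : 1/((i:ℝ)+1) ≤ 1/((i₀:ℝ)+1) := by
          apply one_div_le_one_div_of_le (by positivity)
          have : (i₀:ℝ) ≤ (i:ℝ) := by exact_mod_cast hi
          linarith
        have h2 := hu i
        linarith
      · have hlt : ∀ i : ℕ, ∃ p, p ∈ W ∧ p.2 ≤ -(i:ℝ) := by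
          intro i
          by_contra hcon
          push_neg at hcon
          apply hbdd
          refine ⟨-(i:ℝ), ?_⟩
          rintro t ⟨p, hpW, rfl⟩
          exact (hcon p hpW).le
        choose u huW hu using hlt
        refine ⟨u, huW, fun p hpW => ?_⟩
        obtain ⟨i₀, hi₀⟩ := exists_nat_ge (-p.2)
        filter_upwards [Filter.eventually_ge_atTop i₀] with i hi
        have h1 : -(i:ℝ) ≤ p.2 := by
          have h2 : (i₀:ℝ) ≤ (i:ℝ) := by exact_mod_cast hi
          linarith
        linarith [hu i]
  obtain ⟨u, huW, hcofin⟩ := hseq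
  -- the tube at each witness point
  choose L hLrank hLtube using fun i => htube (u i) (huW i).1
  -- orthonormal bases of the tube planes
  set B : ∀ i : ℕ, OrthonormalBasis (Fin m) ℝ (L i) :=
    fun i => (stdOrthonormalBasis ℝ (L i)).reindex (finCongr (hLrank i)) with hBdef
  set v : ℕ → Fin m → EuclideanSpace ℝ (Fin n) :=
    fun i j => ((B i j : L i) : EuclideanSpace ℝ (Fin n)) with hvdef
  have hvnorm : ∀ i j, ‖v i j‖ = 1 := by
    intro i j
    rw [hvdef]
    have h1 : ‖B i j‖ = 1 := (B i).orthonormal.1 j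
    rw [Submodule.coe_norm] at h1
    exact h1
  -- compactness: extract a convergent subsequence of base points and frames
  set K : Set (EuclideanSpace ℝ (Fin n) × (Fin m → EuclideanSpace ℝ (Fin n))) :=
    (closedBall z r) ×ˢ
      (Set.univ.pi fun _ : Fin m => closedBall (0 : EuclideanSpace ℝ (Fin n)) 1) with hKdef
  have hKcomp : IsCompact K :=
    (isCompact_closedBall z r).prod (isCompact_univ_pi fun _ => isCompact_closedBall 0 1)
  set F : ℕ → EuclideanSpace ℝ (Fin n) × (Fin m → EuclideanSpace ℝ (Fin n)) :=
    fun i => ((u i).1, v i) with hFdef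
  have hFK : ∀ i, F i ∈ K := by
    intro i
    refine ⟨(huW i).2, ?_⟩
    intro j _
    rw [mem_closedBall, dist_zero_right]
    exact le_of_eq (hvnorm i j)
  obtain ⟨⟨xs, w⟩, hxwK, φ, hφ, hconv⟩ := hKcomp.tendsto_subseq hFK
  have hwnorm : ∀ j, ‖w j‖ ≤ 1 := by
    intro j
    have h1 := hxwK.2 j (mem_univ j)
    rwa [mem_closedBall, dist_zero_right] at h1
  -- the finite grid in the limit plane
  set N : ℕ := ⌈4/ε⌉₊ + 1 with hNdef
  set G : Finset (EuclideanSpace ℝ (Fin n)) :=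
    (Fintype.piFinset fun _ : Fin m => Finset.Icc (-(N:ℤ)) (N:ℤ)).image
      (fun cf : Fin m → ℤ =>
        xs + ∑ j : Fin m, ((ε*r) * ((cf j : ℤ) : ℝ)) • w j) with hGdef
  refine ⟨G, ?_, ?_⟩
  · calc G.card ≤ (Fintype.piFinset fun _ : Fin m => Finset.Icc (-(N:ℤ)) (N:ℤ)).card :=
          Finset.card_image_le
      _ = (Finset.Icc (-(N:ℤ)) (N:ℤ)).card ^ m := by
          rw [Fintype.card_piFinset]
          simp
      _ = (2*N+1)^m := by
          congr 1
          rw [Int.card_Icc]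
          omega
      _ = (2*(⌈4/ε⌉₊+1)+1)^m := by rw [hNdef]
  · -- coverage
    rintro x ⟨⟨p'', hp''E, hproj⟩, hxball⟩
    have hp''W : p'' ∈ W := ⟨hp''E, by rw [hproj]; exact hxball⟩
    set δ₀ : ℝ := min (ε*r/2) (ε/(8*((m:ℝ)+1))) with hδ₀def
    have hδ₀pos : 0 < δ₀ := lt_min (by positivity) (by positivity)
    have hev1 : ∀ᶠ i in Filter.atTop, (u (φ i)).2 ≤ p''.2 :=
      hφ.tendsto_atTop.eventually (hcofin p'' hp''W)
    have hev2 : ∀ᶠ i in Filter.atTop, F (φ i) ∈ Metric.ball (xs, w) δ₀ :=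
      hconv.eventually (Metric.ball_mem_nhds _ hδ₀pos)
    obtain ⟨i, hi1, hi2⟩ := (hev1.and hev2).exists
    rw [mem_ball] at hi2
    set y : EuclideanSpace ℝ (Fin n) := (u (φ i)).1 with hydef
    have hPd : dist (F (φ i)) (xs, w)
        = max (dist (F (φ i)).1 xs) (dist (F (φ i)).2 w) := Prod.dist_eq
    have hdy : dist y xs < δ₀ := by
      refine lt_of_le_of_lt ?_ hi2
      rw [hPd]
      exact le_max_left _ _
    have hdv : ∀ j, dist (v (φ i) j) (w j) < δ₀ := by
      intro j
      refine lt_of_le_of_lt ?_ hi2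
      rw [hPd]
      exact (dist_le_pi_dist (F (φ i)).2 w j).trans (le_max_right _ _)
    have hyball : y ∈ closedBall z r := (huW (φ i)).2
    -- apply the tube inclusion at the chosen witness
    have hxtube : x ∈ ({y} : Set (EuclideanSpace ℝ (Fin n))) +
        ((L (φ i) : Set (EuclideanSpace ℝ (Fin n)))) +
        closedBall (0 : EuclideanSpace ℝ (Fin n)) ((2*r)*ε) := by
      apply hLtube (φ i)
      refine ⟨p'', ⟨hp''E, ⟨?_, hi1⟩⟩, hproj⟩
      rw [mem_closedBall, hproj]
      calc dist x y ≤ dist x z + dist z y := dist_triangle _ _ _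
        _ ≤ r + r := by
            refine add_le_add (mem_closedBall.mp hxball) ?_
            rw [dist_comm]
            exact mem_closedBall.mp hyball
        _ = 2*r := by ring
    obtain ⟨a, ha, b, hb, hab⟩ := Set.mem_add.mp hxtube
    obtain ⟨y', hy', l, hl, hy'l⟩ := Set.mem_add.mp ha
    rw [Set.mem_singleton_iff] at hy'
    subst hy'
    rw [mem_closedBall_zero_iff] at hb
    have hxeq : x = y + l + b := by rw [← hab, ← hy'l]
    have hdxy : dist x y ≤ 2*r := by
      calc dist x y ≤ dist x z + dist z y := dist_triangle _ _ _
        _ ≤ r + r := by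
            refine add_le_add (mem_closedBall.mp hxball) ?_
            rw [dist_comm]
            exact mem_closedBall.mp hyball
        _ = 2*r := by ring
    have hl4 : ‖l‖ ≤ 4*r := by
      have h1 : l = (x - y) - b := by
        rw [hxeq]; abel
      rw [h1]
      calc ‖(x - y) - b‖ ≤ ‖x - y‖ + ‖b‖ := norm_sub_le _ _
        _ ≤ 2*r + (2*r)*ε := by
            refine add_le_add ?_ hb
            rw [← dist_eq_norm]
            exact hdxy
        _ ≤ 2*r + (2*r)*1 := by nlinarith
        _ = 4*r := by ring
    -- expand l in the orthonormal frame
    set lL : L (φ i) := ⟨l, hl⟩ with hlLdef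
    set cf : Fin m → ℝ := fun j => (B (φ i)).repr lL j with hcfdef
    have hlsum : l = ∑ j : Fin m, cf j • v (φ i) j := by
      have hrepr := (B (φ i)).sum_repr lL
      have h1 := congrArg (Submodule.subtype (L (φ i))) hrepr
      simp only [map_sum, _root_.map_smul, Submodule.coe_subtype] at h1
      exact h1.symm
    have hcbound : ∀ j, |cf j| ≤ 4*r := by
      intro j
      have h1 : cf j = ⟪v (φ i) j, l⟫ := by
        rw [hcfdef]
        dsimp only
        rw [(B (φ i)).repr_apply_apply]
        rw [Submodule.coe_inner]
      rw [h1]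
      calc |⟪v (φ i) j, l⟫| ≤ ‖v (φ i) j‖ * ‖l‖ := abs_real_inner_le_norm _ _
        _ = ‖l‖ := by rw [hvnorm]; ring
        _ ≤ 4*r := hl4
    -- round the coefficients to the grid
    have hεr : (0:ℝ) < ε*r := by positivity
    set kk : Fin m → ℤ := fun j => round (cf j / (ε*r)) with hkkdef
    have hkkmem : ∀ j, kk j ∈ Finset.Icc (-(N:ℤ)) (N:ℤ)  := by
      intro j
      have h1 : |cf j / (ε*r)| ≤ 4/ε := by
        rw [abs_div, abs_of_pos hεr, div_le_div_iff₀ hεr (by positivity : (0:ℝ) < ε)]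
        calc |cf j| * ε ≤ (4*r) * ε := by
              apply mul_le_mul_of_nonneg_right (hcbound j) hε.le
          _ = 4*(ε*r) := by ring
      have h2 : |((kk j : ℤ) : ℝ)| ≤ 4/ε + 1/2 := by
        have h3 := abs_sub_round (cf j / (ε*r))
        have h4 : |((kk j : ℤ) : ℝ)| ≤ |cf j/(ε*r)| + |cf j/(ε*r) - ((kk j : ℤ) : ℝ)| := by
          have h4' := abs_sub (cf j/(ε*r)) (cf j/(ε*r) - ((kk j : ℤ) : ℝ))
          have he : cf j/(ε*r) - (cf j/(ε*r) - ((kk j : ℤ) : ℝ)) = ((kk j : ℤ) : ℝ) := by ring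
          rwa [he] at h4'
        calc |((kk j : ℤ) : ℝ)| ≤ |cf j/(ε*r)| + |cf j/(ε*r) - ((kk j : ℤ) : ℝ)| := h4
          _ ≤ 4/ε + 1/2 := add_le_add h1 h3
      have hNge : 4/ε + 1/2 ≤ (N:ℝ) := by
        have h5 : 4/ε ≤ (⌈4/ε⌉₊ : ℝ) := Nat.le_ceil _
        rw [hNdef]
        push_cast
        linarith
      have h6 : |((kk j : ℤ) : ℝ)| ≤ (N:ℝ) := h2.trans hNge
      rw [Finset.mem_Icc, ← abs_le]
      exact_mod_cast h6
    set g : EuclideanSpace ℝ (Fin n) :=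
      xs + ∑ j : Fin m, ((ε*r) * ((kk j : ℤ) : ℝ)) • w j with hgdef
    have hgG : g ∈ G := by
      rw [hGdef]
      exact Finset.mem_image.mpr ⟨kk, Fintype.mem_piFinset.mpr hkkmem, rfl⟩
    refine mem_iUnion₂.mpr ⟨g, hgG, ?_⟩
    rw [mem_closedBall, dist_eq_norm]
    -- decompose the difference
    have hxg : x - g = ((y - xs) + b) + (∑ j : Fin m, cf j • (v (φ i) j - w j))
        + (∑ j : Fin m, (cf j - (ε*r)*((kk j : ℤ) : ℝ)) • w j) := by
      have e1 : ∑ j : Fin m, cf j • (v (φ i) j - w j)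
          = (∑ j : Fin m, cf j • v (φ i) j) - (∑ j : Fin m, cf j • w j) := by
        rw [← Finset.sum_sub_distrib]
        exact Finset.sum_congr rfl fun j _ => smul_sub _ _ _
      have e2 : ∑ j : Fin m, (cf j - (ε*r)*((kk j : ℤ) : ℝ)) • w j
          = (∑ j : Fin m, cf j • w j)
            - (∑ j : Fin m, ((ε*r)*((kk j : ℤ) : ℝ)) • w j) := by
        rw [← Finset.sum_sub_distrib]
        exact Finset.sum_congr rfl fun j _ => sub_smul _ _ _
      rw [e1, e2, hxeq, hlsum, hgdef]
      abel
    rw [hxg]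
    -- estimate the three pieces
    have hterm1 : ‖(y - xs) + b‖ ≤ ε*r/2 + (2*r)*ε := by
      calc ‖(y - xs) + b‖ ≤ ‖y - xs‖ + ‖b‖ := norm_add_le _ _
        _ ≤ ε*r/2 + (2*r)*ε := by
            refine add_le_add ?_ hb
            rw [← dist_eq_norm]
            exact (hdy.le.trans (min_le_left _ _))
    have hterm3 : ‖∑ j : Fin m, cf j • (v (φ i) j - w j)‖ ≤ ε*r/2 := by
      calc ‖∑ j : Fin m, cf j • (v (φ i) j - w j)‖
          ≤ ∑ j : Fin m, ‖cf j • (v (φ i) j - w j)‖ := norm_sum_le _ _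
        _ ≤ ∑ _j : Fin m, (4*r) * (ε/(8*((m:ℝ)+1))) := by
            refine Finset.sum_le_sum fun j _ => ?_
            rw [norm_smul, Real.norm_eq_abs]
            refine mul_le_mul (hcbound j) ?_ (norm_nonneg _) (by positivity)
            rw [← dist_eq_norm]
            exact (hdv j).le.trans (min_le_right _ _)
        _ = (m:ℝ) * ((4*r) * (ε/(8*((m:ℝ)+1)))) := by
            rw [Finset.sum_const, Finset.card_univ, Fintype.card_fin, nsmul_eq_mul]
        _ ≤ ε*r/2 := by
            have hm1 : (0:ℝ) < (m:ℝ)+1 := by positivity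
            rw [show (m:ℝ) * ((4*r) * (ε/(8*((m:ℝ)+1)))) =
              ((m:ℝ)/((m:ℝ)+1)) * (ε*r/2) by field_simp; ring]
            have h7 : (m:ℝ)/((m:ℝ)+1) ≤ 1 := by
              rw [div_le_one hm1]; linarith
            nlinarith [mul_pos hε hr]
    have hterm4 : ‖∑ j : Fin m, (cf j - (ε*r)*((kk j : ℤ) : ℝ)) • w j‖
        ≤ (m:ℝ) * (ε*r/2) := by
      calc ‖∑ j : Fin m, (cf j - (ε*r)*((kk j : ℤ) : ℝ)) • w j‖
          ≤ ∑ j : Fin m, ‖(cf j - (ε*r)*((kk j : ℤ) : ℝ)) • w j‖ := norm_sum_le _ _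
        _ ≤ ∑ _j : Fin m, ε*r/2 := by
            refine Finset.sum_le_sum fun j _ => ?_
            rw [norm_smul, Real.norm_eq_abs]
            have h8 : |cf j - (ε*r)*((kk j : ℤ) : ℝ)| ≤ ε*r/2 := by
              have h9 : cf j - (ε*r)*((kk j : ℤ) : ℝ)
                  = (ε*r) * (cf j/(ε*r) - ((kk j : ℤ) : ℝ)) := by
                field_simp
              rw [h9, abs_mul, abs_of_pos hεr]
              have h10 := abs_sub_round (cf j / (ε*r))
              nlinarith
            calc |cf j - (ε*r)*((kk j : ℤ) : ℝ)| * ‖w j‖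
                ≤ (ε*r/2) * 1 := by
                  refine mul_le_mul h8 (hwnorm j) (norm_nonneg _) (by positivity)
              _ = ε*r/2 := by ring
        _ = (m:ℝ) * (ε*r/2) := by
            rw [Finset.sum_const, Finset.card_univ, Fintype.card_fin, nsmul_eq_mul]
    calc ‖((y - xs) + b) + (∑ j : Fin m, cf j • (v (φ i) j - w j))
        + (∑ j : Fin m, (cf j - (ε*r)*((kk j : ℤ) : ℝ)) • w j)‖
        ≤ ‖((y - xs) + b) + (∑ j : Fin m, cf j • (v (φ i) j - w j))‖
          + ‖∑ j : Fin m, (cf j - (ε*r)*((kk j : ℤ) : ℝ)) • w j‖ := norm_add_le _ _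
      _ ≤ (‖(y - xs) + b‖ + ‖∑ j : Fin m, cf j • (v (φ i) j - w j)‖)
          + ‖∑ j : Fin m, (cf j - (ε*r)*((kk j : ℤ) : ℝ)) • w j‖ := by
          exact add_le_add (norm_add_le _ _) le_rfl
      _ ≤ ((ε*r/2 + (2*r)*ε) + ε*r/2) + (m:ℝ) * (ε*r/2) :=
          add_le_add (add_le_add hterm1 hterm3) hterm4
      _ ≤ ((m:ℝ)+4)*ε*r := by nlinarith [mul_pos hε hr, Nat.cast_nonneg (α := ℝ) m]

/-- If a set admits, for every `j`, a cover by `M^j` balls of radius `κ^j * R₀` with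
`κ < 1`, and the contraction factor beats the exponent `d`, then its `d`-dimensional
Hausdorff measure vanishes. -/
lemma measure_zero_of_geom_covers (S : Set (EuclideanSpace ℝ (Fin n))) (M : ℕ)
    (κ R₀ d : ℝ) (hκ0 : 0 < κ) (hκ1 : κ < 1) (hR : 0 < R₀) (hd : 0 < d)
    (hcontr : (M : ℝ≥0∞) * (ENNReal.ofReal κ) ^ d < 1)
    (hcov : ∀ j : ℕ, ∃ G : Finset (EuclideanSpace ℝ (Fin n)), G.card ≤ M^j ∧
      S ⊆ ⋃ g ∈ G, closedBall g (κ^j * R₀)) :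
    μH[d] S = 0 := by
  classical
  choose G hGcard hGsub using hcov
  set t : ∀ _ : ℕ, ℕ → Set (EuclideanSpace ℝ (Fin n)) :=
    fun j i => if i < (G j).card then
      closedBall ((G j).toList.getD i 0) (κ^j * R₀) else ∅ with htdef
  have hrj : ∀ j : ℕ, (0:ℝ) ≤ κ^j * R₀ := fun j => by positivity
  have hdiam : ∀ j i, EMetric.diam (t j i) ≤ ENNReal.ofReal (2*(κ^j * R₀)) := by
    intro j i
    rw [htdef]
    dsimp only
    split_ifs with hi
    · apply EMetric.diam_le
      intro p hp q hq
      rw [edist_dist]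
      apply ENNReal.ofReal_le_ofReal
      have h1 := mem_closedBall.mp hp
      have h2 := mem_closedBall.mp hq
      calc dist p q ≤ dist p ((G j).toList.getD i 0) + dist ((G j).toList.getD i 0) q :=
            dist_triangle _ _ _
        _ ≤ (κ^j * R₀) + (κ^j * R₀) := by
            rw [dist_comm ((G j).toList.getD i 0) q]
            exact add_le_add h1 h2
        _ = 2*(κ^j * R₀) := by ring
    · simp [EMetric.diam]
  have hcovj : ∀ j, S ⊆ ⋃ i : ℕ, t j i := by
    intro j x hx
    obtain ⟨g, hgG, hgball⟩ := mem_iUnion₂.mp (hGsub j hx)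
    have hmem : g ∈ (G j).toList := Finset.mem_toList.mpr hgG
    obtain ⟨idx, hidx, hval⟩ := List.mem_iff_getElem.mp hmem
    have hidx' : idx < (G j).card := by simpa [Finset.length_toList] using hidx
    refine mem_iUnion.mpr ⟨idx, ?_⟩
    rw [htdef]
    dsimp only
    rw [if_pos hidx', List.getD_eq_getElem _ _ hidx, hval]
    exact hgball
  have hr0 : Filter.Tendsto (fun j : ℕ => ENNReal.ofReal (2*(κ^j * R₀)))
      Filter.atTop (𝓝 0) := by
    rw [show (0:ℝ≥0∞) = ENNReal.ofReal 0 by simp]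
    apply ENNReal.tendsto_ofReal
    have h1 : Filter.Tendsto (fun j : ℕ => κ^j) Filter.atTop (𝓝 0) :=
      tendsto_pow_atTop_nhds_zero_of_lt_one hκ0.le hκ1
    have h2 := h1.const_mul (2*R₀)
    simp only [mul_zero] at h2
    refine h2.congr (fun j => by ring)
  have hle := MeasureTheory.Measure.hausdorffMeasure_le_liminf_tsum d S
    (fun j : ℕ => ENNReal.ofReal (2*(κ^j*R₀))) hr0 t
    (Filter.Eventually.of_forall hdiam) (Filter.Eventually.of_forall hcovj)
  have hbound : ∀ j : ℕ, (∑' i : ℕ, EMetric.diam (t j i) ^ d)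
      ≤ (ENNReal.ofReal (2*R₀))^d * ((M:ℝ≥0∞) * (ENNReal.ofReal κ)^d)^j := by
    intro j
    have hzero : ∀ i ∉ Finset.range (G j).card, EMetric.diam (t j i) ^ d = 0 := by
      intro i hi
      rw [htdef]
      dsimp only
      rw [if_neg (by simpa using hi)]
      simp [EMetric.diam, ENNReal.zero_rpow_of_pos hd]
    rw [tsum_eq_sum hzero]
    have h1 : ∀ i ∈ Finset.range (G j).card,
        EMetric.diam (t j i) ^ d ≤ (ENNReal.ofReal (2*(κ^j*R₀)))^d :=
      fun i _ => ENNReal.rpow_le_rpow (hdiam j i) hd.le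
    calc ∑ i ∈ Finset.range (G j).card, EMetric.diam (t j i) ^ d
        ≤ ∑ _i ∈ Finset.range (G j).card, (ENNReal.ofReal (2*(κ^j*R₀)))^d :=
          Finset.sum_le_sum h1
      _ = ((G j).card : ℝ≥0∞) * (ENNReal.ofReal (2*(κ^j*R₀)))^d := by
          rw [Finset.sum_const, Finset.card_range, nsmul_eq_mul]
      _ ≤ ((M:ℝ≥0∞))^j * (ENNReal.ofReal (2*(κ^j*R₀)))^d := by
          apply mul_le_mul_left
          have : ((G j).card : ℝ≥0∞) ≤ ((M^j : ℕ) : ℝ≥0∞) := by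
            exact_mod_cast hGcard j
          simpa [Nat.cast_pow] using this
      _ = (ENNReal.ofReal (2*R₀))^d * ((M:ℝ≥0∞) * (ENNReal.ofReal κ)^d)^j := by
          have he1 : ENNReal.ofReal (2*(κ^j*R₀)) =
              ENNReal.ofReal (2*R₀) * (ENNReal.ofReal κ)^j := by
            rw [← ENNReal.ofReal_pow hκ0.le, ← ENNReal.ofReal_mul (by positivity)]
            congr 1
            ring
          rw [he1, ENNReal.mul_rpow_of_nonneg _ _ hd.le]
          have he2 : ((ENNReal.ofReal κ)^j)^d = ((ENNReal.ofReal κ)^d)^j := by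
            rw [← ENNReal.rpow_natCast (ENNReal.ofReal κ) j,
              ← ENNReal.rpow_natCast ((ENNReal.ofReal κ)^d) j,
              ← ENNReal.rpow_mul, ← ENNReal.rpow_mul, mul_comm]
          rw [he2, mul_pow]
          ring
  have hfin : (ENNReal.ofReal (2*R₀))^d ≠ ⊤ :=
    ENNReal.rpow_ne_top_of_nonneg hd.le ENNReal.ofReal_ne_top
  have htendsto : Filter.Tendsto
      (fun j : ℕ => (ENNReal.ofReal (2*R₀))^d * ((M:ℝ≥0∞) * (ENNReal.ofReal κ)^d)^j)
      Filter.atTop (𝓝 0) := by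
    have h1 := ENNReal.tendsto_pow_atTop_nhds_zero_of_lt_one hcontr
    have h2 := ENNReal.Tendsto.const_mul h1 (Or.inr hfin)
    simpa using h2
  have hliminf : Filter.liminf (fun j : ℕ => ∑' i : ℕ, EMetric.diam (t j i) ^ d)
      Filter.atTop = 0 := by
    apply le_antisymm _ zero_le
    calc Filter.liminf (fun j : ℕ => ∑' i : ℕ, EMetric.diam (t j i) ^ d) Filter.atTop
        ≤ Filter.liminf
            (fun j : ℕ => (ENNReal.ofReal (2*R₀))^d * ((M:ℝ≥0∞) * (ENNReal.ofReal κ)^d)^j)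
            Filter.atTop := Filter.liminf_le_liminf (Filter.Eventually.of_forall hbound)
      _ = 0 := htendsto.liminf_eq
  replace hle := hle.trans_eq hliminf
  exact le_antisymm hle zero_le

end FutureFlatAux

/-- **Proposition (GMT, projection of sets flat in the future).** Let `E ⊆ ℝⁿ × ℝ` and
`m ≤ n`. Suppose that for every `(x,t) ∈ E` and `ε > 0` there is `ρ > 0` such that, for
every `r ∈ (0,ρ)`, the spatial projection of `E ∩ (closedBall(x,r) × [t,∞))` is contained
in `x + L + closedBall(0, rε)` for some `m`-dimensional linear subspace `L ⊆ ℝⁿ`.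
Then `dim_H(π_x(E)) ≤ m`. -/
theorem hausdorff_dim_of_projection_of_future_flat_set (n m : ℕ) (hm : m ≤ n)
    (E : Set (EuclideanSpace ℝ (Fin n) × ℝ))
    (h : ∀ p ∈ E, ∀ ε : ℝ, 0 < ε → ∃ ρ : ℝ, 0 < ρ ∧
      ∀ r : ℝ, 0 < r → r < ρ →
        ∃ L : Submodule ℝ (EuclideanSpace ℝ (Fin n)), Module.finrank ℝ L = m ∧
          Prod.fst '' (E ∩ ((closedBall p.1 r) ×ˢ (Ici p.2))) ⊆
            ({p.1} : Set (EuclideanSpace ℝ (Fin n))) + (L : Set (EuclideanSpace ℝ (Fin n))) +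
              closedBall (0 : EuclideanSpace ℝ (Fin n)) (r * ε)) :
    dimH (Prod.fst '' E) ≤ (m : ℝ≥0∞) := by
  classical
  -- Main step: `μH[m + 1/(i+1)] (π E) = 0` for every `i : ℕ`.
  have key : ∀ i : ℕ, μH[(m:ℝ) + 1/((i:ℝ)+1)] (Prod.fst '' E) = 0 := by
    intro i
    set d : ℝ := (m:ℝ) + 1/((i:ℝ)+1) with hddef
    have hd0 : 0 < d := by positivity
    -- choice of the small parameter ε
    set η : ℝ := min (1/2) (1/(2*(13*((m:ℝ)+4))^m)) with hηdef
    have hη0 : 0 < η := by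
      apply lt_min (by norm_num)
      positivity
    have hη12 : η ≤ 1/2 := min_le_left _ _
    have hη1 : η ≤ 1 := hη12.trans (by norm_num)
    have hη2 : (13*((m:ℝ)+4))^m * η ≤ 1/2 := by
      have h1 : η ≤ 1/(2*(13*((m:ℝ)+4))^m) := min_le_right _ _
      have h2 : (0:ℝ) < (13*((m:ℝ)+4))^m := by positivity
      calc (13*((m:ℝ)+4))^m * η ≤ (13*((m:ℝ)+4))^m * (1/(2*(13*((m:ℝ)+4))^m)) := by
            exact mul_le_mul_of_nonneg_left h1 h2.le
        _ = 1/2 := by field_simp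
    set ε : ℝ := η^(i+1) / ((m:ℝ)+4) with hεdef
    have hε0 : 0 < ε := by positivity
    have hpow1 : η^(i+1) ≤ 1 := pow_le_one₀ hη0.le hη1
    have hε1 : ε ≤ 1 := by
      rw [hεdef, div_le_one (by positivity)]
      calc η^(i+1) ≤ 1 := hpow1
        _ ≤ (m:ℝ)+4 := by
            have := Nat.cast_nonneg (α := ℝ) m
            linarith
    set κ : ℝ := ((m:ℝ)+4)*ε with hκdef
    have hκη : κ = η^(i+1) := by
      rw [hκdef, hεdef]
      field_simp
    have hκ0 : 0 < κ := by positivity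
    have hκ1 : κ < 1 := by
      rw [hκη]
      calc η^(i+1) ≤ η^1 := pow_le_pow_of_le_one hη0.le hη1 (by omega)
        _ = η := pow_one η
        _ < 1 := lt_of_le_of_lt hη12 (by norm_num)
    set N : ℕ := ⌈4/ε⌉₊ + 1 with hNdef
    set M : ℕ := (2*N+1)^m with hMdef
    -- the real contraction inequality
    have hκd : κ ^ d = κ^m * η := by
      rw [hddef, Real.rpow_add hκ0, Real.rpow_natCast]
      congr 1
      rw [hκη]
      have : (1:ℝ)/((i:ℝ)+1) = (((i+1 : ℕ)):ℝ)⁻¹ := by push_cast; ring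
      rw [this]
      exact Real.pow_rpow_inv_natCast hη0.le (Nat.succ_ne_zero i)
    have h2N1 : ((2*N+1 : ℕ) : ℝ) ≤ 13/ε := by
      have hceil : ((⌈4/ε⌉₊ : ℕ) : ℝ) ≤ 4/ε + 1 := (Nat.ceil_lt_add_one (by positivity)).le
      have h5 : (5:ℝ) ≤ 5/ε := by
        rw [le_div_iff₀ hε0]; nlinarith
      have h8 : (8:ℝ)/ε = 2*(4/ε) := by ring
      have h13 : (13:ℝ)/ε = 8/ε + 5/ε := by ring
      push_cast [hNdef]
      linarith
    have hM13 : (M:ℝ) ≤ (13/ε)^m := by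
      rw [hMdef]
      push_cast
      exact pow_le_pow_left₀ (by positivity) (by exact_mod_cast h2N1) m
    have hMκm : (M:ℝ) * κ^m ≤ (13*((m:ℝ)+4))^m := by
      have heq : (13/ε)^m * κ^m = (13*((m:ℝ)+4))^m := by
        rw [← mul_pow]
        congr 1
        rw [hκdef]
        field_simp
      calc (M:ℝ) * κ^m ≤ (13/ε)^m * κ^m :=
            mul_le_mul_of_nonneg_right hM13 (pow_nonneg hκ0.le m)
        _ = (13*((m:ℝ)+4))^m := heq
    have hMκd : (M:ℝ) * κ^d ≤ 1/2 := by
      rw [hκd, ← mul_assoc]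
      calc (M:ℝ)*κ^m*η ≤ (13*((m:ℝ)+4))^m * η :=
            mul_le_mul_of_nonneg_right hMκm hη0.le
        _ ≤ 1/2 := hη2
    have hcontr : (M : ℝ≥0∞) * (ENNReal.ofReal κ) ^ d < 1 := by
      have hMcast : (M : ℝ≥0∞) = ENNReal.ofReal (M:ℝ) := (ENNReal.ofReal_natCast M).symm
      rw [hMcast, ENNReal.ofReal_rpow_of_pos hκ0,
        ← ENNReal.ofReal_mul (by positivity : (0:ℝ) ≤ (M:ℝ))]
      calc ENNReal.ofReal ((M:ℝ) * κ^d) ≤ ENNReal.ofReal (1/2) :=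
            ENNReal.ofReal_le_ofReal hMκd
        _ < 1 := by
            rw [ENNReal.ofReal_lt_one]; norm_num
    -- decompose E according to the size of ρ and a countable family of balls
    choose! ρ hρ0 hρtube using fun (p : EuclideanSpace ℝ (Fin n) × ℝ) (hp : p ∈ E) => h p hp ε hε0
    obtain ⟨c, hc⟩ : ∃ c : ℕ → EuclideanSpace ℝ (Fin n), DenseRange c :=
      ⟨TopologicalSpace.denseSeq (EuclideanSpace ℝ (Fin n)), TopologicalSpace.denseRange_denseSeq (EuclideanSpace ℝ (Fin n))⟩
    set Ek : ℕ → Set (EuclideanSpace ℝ (Fin n) × ℝ) := fun k => {p | p ∈ E ∧ 1/((k:ℝ)+1) < ρ p} with hEkdef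
    set piece : ℕ × ℕ → Set (EuclideanSpace ℝ (Fin n)) := fun kl =>
      (Prod.fst '' (Ek kl.1)) ∩ closedBall (c kl.2) (1/(8*((kl.1:ℝ)+1))) with hpiecedef
    have hcover : Prod.fst '' E ⊆ ⋃ kl : ℕ × ℕ, piece kl := by
      rintro x ⟨p, hpE, rfl⟩
      obtain ⟨k, hk⟩ := exists_nat_one_div_lt (hρ0 p hpE)
      have hrad : (0:ℝ) < 1/(8*((k:ℝ)+1)) := by positivity
      obtain ⟨l, hl⟩ := hc.exists_dist_lt p.1 hrad
      refine mem_iUnion.mpr ⟨(k, l), ⟨⟨p, ⟨hpE, hk⟩, rfl⟩, ?_⟩⟩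
      simpa [mem_closedBall] using hl.le
    refine measure_mono_null hcover (measure_iUnion_null fun kl => ?_)
    set k := kl.1
    set R₀ : ℝ := 1/(8*((k:ℝ)+1)) with hR₀def
    have hR₀pos : 0 < R₀ := by positivity
    -- tube hypothesis for Ek k at all sufficiently small radii
    have htube' : ∀ r' : ℝ, 0 < r' → r' ≤ R₀ →
        ∀ p ∈ Ek k, ∃ L : Submodule ℝ (EuclideanSpace ℝ (Fin n)), Module.finrank ℝ L = m ∧
          Prod.fst '' ((Ek k) ∩ ((closedBall p.1 (2*r')) ×ˢ (Ici p.2))) ⊆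
            ({p.1} : Set (EuclideanSpace ℝ (Fin n))) + (L : Set (EuclideanSpace ℝ (Fin n))) + closedBall (0 : EuclideanSpace ℝ (Fin n)) ((2*r')*ε) := by
      intro r' hr'0 hr'le p hp
      have h2r : 2*r' < ρ p := by
        have h1 : 2*r' ≤ 2*R₀ := by linarith
        have h2 : 2*R₀ < 1/((k:ℝ)+1) := by
          rw [hR₀def, mul_one_div, div_lt_div_iff₀ (by positivity) (by positivity)]
          nlinarith [Nat.cast_nonneg (α := ℝ) k]
        calc 2*r' ≤ 2*R₀ := h1
          _ < 1/((k:ℝ)+1) := h2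
          _ < ρ p := hp.2
      obtain ⟨L, hLrank, hLtube⟩ := hρtube p hp.1 (2*r') (by linarith) h2r
      refine ⟨L, hLrank, ?_⟩
      refine Subset.trans ?_ hLtube
      apply image_mono
      exact inter_subset_inter_left _ (fun q hq => hq.1)
    -- iterate the covering step
    have hiter : ∀ j : ℕ, ∃ G : Finset (EuclideanSpace ℝ (Fin n)), G.card ≤ M^j ∧
        (Prod.fst '' (Ek k)) ∩ closedBall (c kl.2) R₀ ⊆
          ⋃ g ∈ G, closedBall g (κ^j * R₀) := by
      intro j
      induction j with
      | zero =>
        refine ⟨{c kl.2}, by simp, ?_⟩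
        intro x hx
        simp only [pow_zero, one_mul, Finset.mem_singleton, iUnion_iUnion_eq_left]
        exact hx.2
      | succ j ih =>
        obtain ⟨G, hGcard, hGsub⟩ := ih
        have hrj : 0 < κ^j * R₀ := by positivity
        have hrjle : κ^j * R₀ ≤ R₀ := by
          have : κ^j ≤ 1 := pow_le_one₀ hκ0.le hκ1.le
          nlinarith
        have hstep : ∀ g : EuclideanSpace ℝ (Fin n), ∃ G' : Finset (EuclideanSpace ℝ (Fin n)), G'.card ≤ M ∧
            (Prod.fst '' (Ek k)) ∩ closedBall g (κ^j * R₀) ⊆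
              ⋃ g' ∈ G', closedBall g' (κ^(j+1) * R₀) := by
          intro g
          obtain ⟨G', hG'card, hG'sub⟩ :=
            FutureFlatAux.coverStep m (Ek k) ε (κ^j * R₀) hε0 hε1 hrj
              (htube' (κ^j * R₀) hrj hrjle) g
          refine ⟨G', ?_, ?_⟩
          · simpa [hMdef, hNdef] using hG'card
          · have hradeq : ((m:ℝ)+4)*ε*(κ^j * R₀) = κ^(j+1) * R₀ := by
              rw [pow_succ, hκdef]; ring
            rwa [hradeq] at hG'sub
        choose Gf hGfcard hGfsub using hstep
        refine ⟨G.biUnion Gf, ?_, ?_⟩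
        · calc (G.biUnion Gf).card ≤ ∑ g ∈ G, (Gf g).card := Finset.card_biUnion_le
            _ ≤ G.card * M := by
                apply Finset.sum_le_card_nsmul
                intro g _
                exact hGfcard g
            _ ≤ M^j * M := Nat.mul_le_mul hGcard (le_refl M)
            _ = M^(j+1) := (pow_succ M j).symm
        · intro x hx
          obtain ⟨g, hgG, hgball⟩ := mem_iUnion₂.mp (hGsub hx)
          have hx' : x ∈ (Prod.fst '' (Ek k)) ∩ closedBall g (κ^j * R₀) := ⟨hx.1, hgball⟩
          obtain ⟨g', hg'G, hg'ball⟩ := mem_iUnion₂.mp (hGfsub g hx')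
          exact mem_iUnion₂.mpr ⟨g', Finset.mem_biUnion.mpr ⟨g, hgG, hg'G⟩, hg'ball⟩
    exact FutureFlatAux.measure_zero_of_geom_covers _ M κ R₀ d hκ0 hκ1 hR₀pos hd0 hcontr hiter
  -- conclude the dimension bound
  apply dimH_le
  intro d' hd'
  by_contra hno
  push_neg at hno
  have hmd' : (m:ℝ) < (d' : ℝ) := by
    have h1 : ((m:ℕ) : ℝ≥0∞) < ((d' : ℝ≥0) : ℝ≥0∞) := hno
    rw [show ((m:ℕ) : ℝ≥0∞) = (((m:ℕ) : ℝ≥0) : ℝ≥0∞) by simp] at h1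
    exact_mod_cast h1
  obtain ⟨i, hi⟩ := exists_nat_one_div_lt (sub_pos.mpr hmd')
  have hlt : (m:ℝ) + 1/((i:ℝ)+1) < (d' : ℝ) := by linarith
  rcases MeasureTheory.Measure.hausdorffMeasure_zero_or_top hlt (Prod.fst '' E) with h0 | htop
  · rw [hd'] at h0
    exact ENNReal.top_ne_zero h0
  · rw [key i] at htop
    exact ENNReal.zero_ne_top htop
end
end

section
/- Let E ⊂ ℝⁿ × (−1,1) and β ≥ 0 with dim_H( π_x(E) ) ≤ β. Assume that for every ε > 0 and every (x₀,t₀) ∈ E there exists ρ = ρ(ε,x₀,t₀) > 0 such that { (x,t) ∈ B_ρ(x₀) × (−1,1) : t − t₀ > |x − x₀|^{2−ε} } ∩ E = ∅. Then the parabolic Hausdorff dimension of E satisfies dim_par(E) ≤ β. -/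
open MeasureTheory Metric Set Filter
open scoped ENNReal NNReal

noncomputable section

private lemma aux_add_rpow {a b p : ℝ} (ha : 0 ≤ a) (hb : 0 ≤ b) (hp : 0 ≤ p) :
    (a + b) ^ p ≤ 2 ^ p * (a ^ p + b ^ p) := by
  rcases le_total a b with hab | hab
  · calc (a + b) ^ p ≤ (2 * b) ^ p :=
        Real.rpow_le_rpow (by linarith) (by linarith) hp
    _ = 2 ^ p * b ^ p := Real.mul_rpow (by norm_num) hb
    _ ≤ 2 ^ p * (a ^ p + b ^ p) := by
        have h1 := Real.rpow_nonneg ha p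
        have h2 := Real.rpow_nonneg (show (0:ℝ) ≤ 2 by norm_num) p
        nlinarith
  · calc (a + b) ^ p ≤ (2 * a) ^ p :=
        Real.rpow_le_rpow (by linarith) (by linarith) hp
    _ = 2 ^ p * a ^ p := Real.mul_rpow (by norm_num) ha
    _ ≤ 2 ^ p * (a ^ p + b ^ p) := by
        have h1 := Real.rpow_nonneg hb p
        have h2 := Real.rpow_nonneg (show (0:ℝ) ≤ 2 by norm_num) p
        nlinarith

private lemma aux_cover_of_null {X : Type*} [EMetricSpace X] [MeasurableSpace X] [BorelSpace X]
    {s : Set X} {d : ℝ} (hμ : μH[d] s = 0) {r₀ c : ℝ≥0∞} (hr₀ : 0 < r₀) (hc : 0 < c) :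
    ∃ t : ℕ → Set X, (s ⊆ ⋃ m, t m) ∧ (∀ m, EMetric.diam (t m) ≤ r₀) ∧
      (∑' m, ⨆ _ : (t m).Nonempty, EMetric.diam (t m) ^ d) ≤ c := by
  have h1 : (⨅ (t : ℕ → Set X) (_ : s ⊆ ⋃ m, t m) (_ : ∀ m, EMetric.diam (t m) ≤ r₀),
      ∑' m, ⨆ _ : (t m).Nonempty, EMetric.diam (t m) ^ d) ≤ μH[d] s := by
    rw [MeasureTheory.Measure.hausdorffMeasure_apply]
    exact le_iSup₂ (f := fun (r : ℝ≥0∞) (_ : 0 < r) =>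
      ⨅ (t : ℕ → Set X) (_ : s ⊆ ⋃ m, t m) (_ : ∀ m, EMetric.diam (t m) ≤ r),
        ∑' m, ⨆ _ : (t m).Nonempty, EMetric.diam (t m) ^ d) r₀ hr₀
  rw [hμ] at h1
  have h2 := lt_of_le_of_lt h1 hc
  simp only [iInf_lt_iff] at h2
  obtain ⟨t, ht1, ht2, ht3⟩ := h2
  exact ⟨t, ht1, ht2, ht3.le⟩

set_option maxHeartbeats 1000000 in
/-- **Lemma (GMT).** Let `E ⊆ ℝⁿ × (-1,1)` with `dim_H(π_x(E)) ≤ β`. Assume that for every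
`ε > 0` and every `(x₀,t₀) ∈ E` there is `ρ > 0` such that
`{(x,t) ∈ B_ρ(x₀) × (-1,1) : t - t₀ > |x - x₀|^{2-ε}} ∩ E = ∅`.
Then the parabolic Hausdorff dimension of `E` is at most `β`. -/
theorem parabolic_dimension_from_spatial_projection (n : ℕ) (hn : 1 ≤ n)
    (β : ℝ) (hβ : 0 ≤ β) (E : Set (EuclideanSpace ℝ (Fin n) × ℝ))
    (hE : E ⊆ (univ : Set (EuclideanSpace ℝ (Fin n))) ×ˢ (Ioo (-1 : ℝ) 1))
    (hdim : dimH (Prod.fst '' E) ≤ ENNReal.ofReal β)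
    (h : ∀ ε : ℝ, 0 < ε → ∀ p₀ ∈ E, ∃ ρ : ℝ, 0 < ρ ∧
      ∀ q ∈ E, ¬ (dist q.1 p₀.1 < ρ ∧ q.2 ∈ Ioo (-1 : ℝ) 1 ∧
        dist q.1 p₀.1 ^ ((2 : ℝ) - ε) < q.2 - p₀.2)) :
    ParDimLE n E β := by
  classical
  intro β' hβ' δ hδ
  have hβ'0 : 0 < β' := lt_of_le_of_lt hβ hβ'
  set β'' : ℝ := (β + β') / 2 with hβ''def
  have hββ'' : β < β'' := by rw [hβ''def]; linarith
  have hβ''0 : 0 < β'' := lt_of_le_of_lt hβ hββ''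
  set ε : ℝ := min 1 ((β' - β) / β') with hεdef
  have hε0 : 0 < ε := lt_min one_pos (div_pos (by linarith) hβ'0)
  have hε1 : ε ≤ 1 := min_le_left _ _
  have hexp : β'' ≤ (1 - ε / 2) * β' := by
    have h2 : ε ≤ (β' - β) / β' := min_le_right _ _
    have h1 : ε * β' ≤ β' - β := by
      calc ε * β' ≤ ((β' - β) / β') * β' := mul_le_mul_of_nonneg_right h2 hβ'0.le
      _ = β' - β := div_mul_cancel₀ _ hβ'0.ne'
    have h3 : (1 - ε / 2) * β' = β' - (ε * β') / 2 := by ring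
    rw [hβ''def, h3]; linarith
  have h2ε0 : (0:ℝ) < 2 - ε := by linarith
  have hhalf : (0:ℝ) < 1 - ε / 2 := by linarith
  -- decomposition of E by the scale at which h applies
  set Ek : ℕ → Set (EuclideanSpace ℝ (Fin n) × ℝ) := fun k =>
    {p | p ∈ E ∧ ∀ q ∈ E, dist q.1 p.1 ≤ 1 / ((k:ℝ) + 1) →
      q.2 - p.2 ≤ dist q.1 p.1 ^ ((2:ℝ) - ε)} with hEkdef
  have hEkE : ∀ k, Ek k ⊆ E := fun k p hp => hp.1
  have hEmem : ∀ p ∈ E, ∃ k, p ∈ Ek k := by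
    intro p hp
    obtain ⟨ρ, hρ0, hρ⟩ := h ε hε0 p hp
    obtain ⟨k, hk⟩ := exists_nat_one_div_lt hρ0
    refine ⟨k, hp, fun q hq hd => ?_⟩
    by_contra hlt
    push_neg at hlt
    exact hρ q hq ⟨lt_of_le_of_lt hd hk, (Set.mem_prod.mp (hE hq)).2, hlt⟩
  -- the spatial projections are null for μH^{β''}
  have hμ : ∀ k, μH[β''] (Prod.fst '' Ek k) = 0 := by
    intro k
    have hlt : dimH (Prod.fst '' Ek k) < (β''.toNNReal : ℝ≥0∞) := by
      refine lt_of_le_of_lt (le_trans (dimH_mono (Set.image_mono (hEkE k))) hdim) ?_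
      have he : (β''.toNNReal : ℝ≥0∞) = ENNReal.ofReal β'' := rfl
      rw [he]
      exact (ENNReal.ofReal_lt_ofReal_iff hβ''0).mpr hββ''
    have h0 := hausdorffMeasure_of_dimH_lt hlt
    rwa [Real.coe_toNNReal _ hβ''0.le] at h0
  -- choose covers of the projections
  have hr₀pos : ∀ k : ℕ, (0:ℝ) < min 1 (1 / ((k:ℝ) + 1)) := fun k =>
    lt_min one_pos (by positivity : (0:ℝ) < 1 / ((k:ℝ) + 1))
  have h4β : (0:ℝ) < (4:ℝ) ^ β' := Real.rpow_pos_of_pos (by norm_num) β'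
  have hcov : ∀ k : ℕ, ∃ t : ℕ → Set (EuclideanSpace ℝ (Fin n)),
      (Prod.fst '' Ek k ⊆ ⋃ m, t m) ∧
      (∀ m, EMetric.diam (t m) ≤ ENNReal.ofReal (min 1 (1 / ((k:ℝ) + 1)))) ∧
      (∑' m, ⨆ _ : (t m).Nonempty, EMetric.diam (t m) ^ β'') ≤
        ENNReal.ofReal (δ * (2⁻¹:ℝ) ^ (k + 3) / 4 ^ β') := by
    intro k
    exact aux_cover_of_null (hμ k) (ENNReal.ofReal_pos.mpr (hr₀pos k))
      (ENNReal.ofReal_pos.mpr (by positivity))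
  choose S hS1 hS2 hS3 using hcov
  -- choose base points
  have hptex : ∀ k j : ℕ, ∃ p : EuclideanSpace ℝ (Fin n) × ℝ,
      (∃ q, q ∈ Ek k ∧ q.1 ∈ S k j) → p ∈ Ek k ∧ p.1 ∈ S k j := by
    intro k j
    by_cases hkj : ∃ q, q ∈ Ek k ∧ q.1 ∈ S k j
    · exact ⟨hkj.choose, fun _ => hkj.choose_spec⟩
    · exact ⟨(0, 0), fun h' => absurd h' hkj⟩
  choose pt hpt using hptex
  -- radii
  set d : ℕ → ℕ → ℝ := fun k j => (EMetric.diam (S k j)).toReal with hddef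
  set η : ℕ → ℕ → ℝ := fun k j => (δ * (2⁻¹:ℝ) ^ (k + j + 3) / 2 ^ β') ^ β'⁻¹ with hηdef
  set P : ℕ → ℕ → Prop := fun k j => ∃ q, q ∈ Ek k ∧ q.1 ∈ S k j with hPdef
  set rr : ℕ → ℕ → ℝ := fun k j =>
    (if P k j then 2 * d k j ^ (1 - ε / 2) else 0) + η k j with hrrdef
  have hd0 : ∀ k j, 0 ≤ d k j := fun k j => ENNReal.toReal_nonneg
  have hdiam_ne : ∀ k j, EMetric.diam (S k j) ≠ ⊤ := fun k j =>
    ((hS2 k j).trans_lt ENNReal.ofReal_lt_top).ne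
  have hd_le : ∀ k j, d k j ≤ min 1 (1 / ((k:ℝ) + 1)) := fun k j =>
    ENNReal.toReal_le_of_le_ofReal (hr₀pos k).le (hS2 k j)
  have hd1 : ∀ k j, d k j ≤ 1 := fun k j => (hd_le k j).trans (min_le_left _ _)
  have h2β : (0:ℝ) < 2 ^ β' := Real.rpow_pos_of_pos two_pos β'
  have hη0 : ∀ k j, 0 < η k j := by
    intro k j
    apply Real.rpow_pos_of_pos
    positivity
  have hrr0 : ∀ k j, 0 ≤ rr k j := by
    intro k j
    have h1 := hη0 k j
    have h2 : 0 ≤ (if P k j then 2 * d k j ^ (1 - ε / 2) else 0) := by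
      split
      · exact mul_nonneg (by norm_num) (Real.rpow_nonneg (hd0 k j) _)
      · exact le_refl 0
    simp only [hrrdef]
    linarith
  -- containment of E_k-points above S k j in the cylinder
  have hmem : ∀ k j, ∀ q ∈ Ek k, q.1 ∈ S k j →
      q ∈ (ball ((pt k j).1) (rr k j)) ×ˢ
        (Ioo ((pt k j).2 - rr k j ^ 2) ((pt k j).2 + rr k j ^ 2)) := by
    intro k j q hq hqS
    have hP : P k j := ⟨q, hq, hqS⟩
    obtain ⟨hpE, hpS⟩ := hpt k j hP
    have hrr_eq : rr k j = 2 * d k j ^ (1 - ε / 2) + η k j := by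
      simp only [hrrdef, if_pos hP]
    have hdist : dist q.1 (pt k j).1 ≤ d k j := by
      rw [dist_edist]
      exact ENNReal.toReal_mono (hdiam_ne k j) (EMetric.edist_le_diam_of_mem hqS hpS)
    have hdist0 : (0:ℝ) ≤ dist q.1 (pt k j).1 := dist_nonneg
    have hdk : d k j ≤ 1 / ((k:ℝ) + 1) := (hd_le k j).trans (min_le_right _ _)
    set a : ℝ := d k j ^ (1 - ε / 2) with hadef
    have ha0 : 0 ≤ a := Real.rpow_nonneg (hd0 k j) _
    have haux : d k j ≤ a := by
      rcases eq_or_lt_of_le (hd0 k j) with h0 | h0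
      · rw [hadef, ← h0, Real.zero_rpow hhalf.ne']
      · calc d k j = d k j ^ (1:ℝ) := (Real.rpow_one _).symm
        _ ≤ a := Real.rpow_le_rpow_of_exponent_ge h0 (hd1 k j) (by linarith)
    have ht1 : q.2 - (pt k j).2 ≤ dist q.1 (pt k j).1 ^ ((2:ℝ) - ε) :=
      hpE.2 q (hEkE k hq) (hdist.trans hdk)
    have ht2 : (pt k j).2 - q.2 ≤ dist (pt k j).1 q.1 ^ ((2:ℝ) - ε) :=
      hq.2 (pt k j) (hEkE k hpE) (by rw [dist_comm]; exact hdist.trans hdk)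
    have hmono : dist q.1 (pt k j).1 ^ ((2:ℝ) - ε) ≤ d k j ^ ((2:ℝ) - ε) :=
      Real.rpow_le_rpow hdist0 hdist h2ε0.le
    have hsq : d k j ^ ((2:ℝ) - ε) = a ^ (2:ℕ) := by
      rw [hadef, ← Real.rpow_natCast (d k j ^ (1 - ε / 2)) 2,
        ← Real.rpow_mul (hd0 k j)]
      congr 1
      push_cast
      ring
    have hη := hη0 k j
    have hkey : a ^ (2:ℕ) < rr k j ^ 2 := by
      rw [hrr_eq]
      nlinarith
    constructor
    · -- spatial
      show q.1 ∈ ball ((pt k j).1) (rr k j)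
      rw [mem_ball]
      rw [hrr_eq]
      calc dist q.1 (pt k j).1 ≤ d k j := hdist
      _ ≤ a := haux
      _ < 2 * a + η k j := by nlinarith
    · -- temporal
      have hu : q.2 - (pt k j).2 ≤ a ^ (2:ℕ) := by
        calc q.2 - (pt k j).2 ≤ dist q.1 (pt k j).1 ^ ((2:ℝ) - ε) := ht1
        _ ≤ d k j ^ ((2:ℝ) - ε) := hmono
        _ = a ^ (2:ℕ) := hsq
      have hl : (pt k j).2 - q.2 ≤ a ^ (2:ℕ) := by
        calc (pt k j).2 - q.2 ≤ dist (pt k j).1 q.1 ^ ((2:ℝ) - ε) := ht2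
        _ = dist q.1 (pt k j).1 ^ ((2:ℝ) - ε) := by rw [dist_comm]
        _ ≤ d k j ^ ((2:ℝ) - ε) := hmono
        _ = a ^ (2:ℕ) := hsq
      show q.2 ∈ Ioo ((pt k j).2 - rr k j ^ 2) ((pt k j).2 + rr k j ^ 2)
      rw [Set.mem_Ioo]
      constructor
      · linarith
      · linarith
  -- arithmetic facts about η
  have hηpow : ∀ k j : ℕ, η k j ^ β' = δ * (2⁻¹:ℝ) ^ (k + j + 3) / 2 ^ β' := by
    intro k j
    simp only [hηdef]
    exact Real.rpow_inv_rpow (by positivity) hβ'0.ne'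
  have hηβ : ∀ k j : ℕ, η k j ^ β' ≤ δ * (2⁻¹:ℝ) ^ (k + j + 3) := by
    intro k j
    rw [hηpow k j]
    have h1 : (1:ℝ) ≤ 2 ^ β' := by
      rw [← Real.one_rpow β']
      exact Real.rpow_le_rpow (by norm_num) (by norm_num) hβ'0.le
    exact div_le_self (by positivity) h1
  -- cost of each cylinder
  have hcost : ∀ k j : ℕ, ENNReal.ofReal (rr k j ^ β') ≤
      ENNReal.ofReal ((4:ℝ) ^ β') * (⨆ _ : (S k j).Nonempty, EMetric.diam (S k j) ^ β'') +
      ENNReal.ofReal (δ * (2⁻¹:ℝ) ^ (k + j + 3)) := by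
    intro k j
    by_cases hP : P k j
    · have hrr_eq : rr k j = 2 * d k j ^ (1 - ε / 2) + η k j := by
        simp only [hrrdef, if_pos hP]
      have hSne : (S k j).Nonempty := ⟨(pt k j).1, (hpt k j hP).2⟩
      set a : ℝ := d k j ^ (1 - ε / 2) with hadef
      have ha0 : 0 ≤ a := Real.rpow_nonneg (hd0 k j) _
      have key : rr k j ^ β' ≤ 4 ^ β' * d k j ^ β'' + δ * (2⁻¹:ℝ) ^ (k + j + 3) := by
        have h1 : rr k j ^ β' ≤ 2 ^ β' * ((2 * a) ^ β' + η k j ^ β') := by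
          rw [hrr_eq]
          exact aux_add_rpow (by linarith) (hη0 k j).le hβ'0.le
        have h2 : (2 * a : ℝ) ^ β' = 2 ^ β' * a ^ β' := Real.mul_rpow (by norm_num) ha0
        have h3 : a ^ β' ≤ d k j ^ β'' := by
          rw [hadef, ← Real.rpow_mul (hd0 k j)]
          rcases eq_or_lt_of_le (hd0 k j) with h0 | h0
          · rw [← h0, Real.zero_rpow (by positivity : (0:ℝ) < (1 - ε / 2) * β').ne',
              Real.zero_rpow hβ''0.ne']
          · exact Real.rpow_le_rpow_of_exponent_ge h0 (hd1 k j) hexp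
        have h4 : (2:ℝ) ^ β' * 2 ^ β' = 4 ^ β' := by
          rw [← Real.mul_rpow (by norm_num) (by norm_num)]
          norm_num
        have h5 : (2:ℝ) ^ β' * η k j ^ β' = δ * (2⁻¹:ℝ) ^ (k + j + 3) := by
          rw [hηpow k j]
          field_simp
        calc rr k j ^ β' ≤ 2 ^ β' * (2 ^ β' * a ^ β' + η k j ^ β') := by rw [← h2]; exact h1
        _ = (2 ^ β' * 2 ^ β') * a ^ β' + 2 ^ β' * η k j ^ β' := by ring
        _ ≤ (2 ^ β' * 2 ^ β') * (d k j ^ β'') + 2 ^ β' * η k j ^ β' :=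
            add_le_add_left (mul_le_mul_of_nonneg_left h3 (mul_pos h2β h2β).le) _
        _ = 4 ^ β' * d k j ^ β'' + δ * (2⁻¹:ℝ) ^ (k + j + 3) := by rw [h4, h5]
      have hdT : ENNReal.ofReal (d k j ^ β'') = EMetric.diam (S k j) ^ β'' := by
        rw [← ENNReal.ofReal_rpow_of_nonneg (hd0 k j) hβ''0.le]
        congr 1
        simp only [hddef]
        exact ENNReal.ofReal_toReal (hdiam_ne k j)
      calc ENNReal.ofReal (rr k j ^ β')
          ≤ ENNReal.ofReal (4 ^ β' * d k j ^ β'' + δ * (2⁻¹:ℝ) ^ (k + j + 3)) :=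
            ENNReal.ofReal_le_ofReal key
        _ ≤ ENNReal.ofReal (4 ^ β' * d k j ^ β'') +
            ENNReal.ofReal (δ * (2⁻¹:ℝ) ^ (k + j + 3)) := ENNReal.ofReal_add_le
        _ = ENNReal.ofReal ((4:ℝ) ^ β') *
              (⨆ _ : (S k j).Nonempty, EMetric.diam (S k j) ^ β'') +
            ENNReal.ofReal (δ * (2⁻¹:ℝ) ^ (k + j + 3)) := by
            rw [ENNReal.ofReal_mul h4β.le, hdT, iSup_pos hSne]
    · have hrr_eq : rr k j = η k j := by
        simp only [hrrdef, if_neg hP, zero_add]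
      calc ENNReal.ofReal (rr k j ^ β')
          ≤ ENNReal.ofReal (δ * (2⁻¹:ℝ) ^ (k + j + 3)) := by
            rw [hrr_eq]; exact ENNReal.ofReal_le_ofReal (hηβ k j)
        _ ≤ _ := le_add_self
  -- geometric series
  have hQgeom : (∑' m : ℕ, ENNReal.ofReal ((2⁻¹:ℝ) ^ m)) = 2 := by
    have hq : ∀ m : ℕ, ENNReal.ofReal ((2⁻¹:ℝ) ^ m) = ((2:ℝ≥0∞)⁻¹) ^ m := by
      intro m
      rw [ENNReal.ofReal_pow (by norm_num)]
      congr 1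
      rw [ENNReal.ofReal_inv_of_pos (by norm_num)]
      norm_num
    rw [tsum_congr hq, ENNReal.tsum_geometric, ENNReal.one_sub_inv_two, inv_inv]
  -- summation over j
  have hstep2 : ∀ k : ℕ, (∑' j : ℕ,
      (ENNReal.ofReal ((4:ℝ) ^ β') * (⨆ _ : (S k j).Nonempty, EMetric.diam (S k j) ^ β'') +
        ENNReal.ofReal (δ * (2⁻¹:ℝ) ^ (k + j + 3)))) ≤
      ENNReal.ofReal δ * ENNReal.ofReal ((2⁻¹:ℝ) ^ (k + 1)) := by
    intro k
    rw [ENNReal.tsum_add]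
    have hA : (∑' j : ℕ, ENNReal.ofReal ((4:ℝ) ^ β') *
        (⨆ _ : (S k j).Nonempty, EMetric.diam (S k j) ^ β'')) ≤
        ENNReal.ofReal (δ * (2⁻¹:ℝ) ^ (k + 3)) := by
      rw [ENNReal.tsum_mul_left]
      calc _ ≤ ENNReal.ofReal ((4:ℝ) ^ β') *
            ENNReal.ofReal (δ * (2⁻¹:ℝ) ^ (k + 3) / 4 ^ β') := mul_le_mul_right (hS3 k) _
      _ = ENNReal.ofReal ((4:ℝ) ^ β' * (δ * (2⁻¹:ℝ) ^ (k + 3) / 4 ^ β')) :=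
            (ENNReal.ofReal_mul h4β.le).symm
      _ = ENNReal.ofReal (δ * (2⁻¹:ℝ) ^ (k + 3)) := by
            congr 1
            field_simp
    have hB : (∑' j : ℕ, ENNReal.ofReal (δ * (2⁻¹:ℝ) ^ (k + j + 3))) =
        ENNReal.ofReal (δ * (2⁻¹:ℝ) ^ (k + 3)) * 2 := by
      have hsplit : ∀ j : ℕ, ENNReal.ofReal (δ * (2⁻¹:ℝ) ^ (k + j + 3)) =
          ENNReal.ofReal (δ * (2⁻¹:ℝ) ^ (k + 3)) * ENNReal.ofReal ((2⁻¹:ℝ) ^ j) := by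
        intro j
        rw [← ENNReal.ofReal_mul (by positivity)]
        congr 1
        rw [mul_assoc, ← pow_add]
        congr 2
        omega
      rw [tsum_congr hsplit, ENNReal.tsum_mul_left, hQgeom]
    calc _ ≤ ENNReal.ofReal (δ * (2⁻¹:ℝ) ^ (k + 3)) +
          ENNReal.ofReal (δ * (2⁻¹:ℝ) ^ (k + 3)) * 2 := add_le_add hA hB.le
    _ ≤ ENNReal.ofReal δ * ENNReal.ofReal ((2⁻¹:ℝ) ^ (k + 1)) := by
        rw [← ENNReal.ofReal_mul hδ.le]
        have e2 : (2:ℝ≥0∞) = ENNReal.ofReal (2:ℝ) := by norm_num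
        rw [e2, ← ENNReal.ofReal_mul (by positivity),
          ← ENNReal.ofReal_add (by positivity) (by positivity)]
        apply ENNReal.ofReal_le_ofReal
        have hx : (0:ℝ) < (2⁻¹:ℝ) ^ (k + 3) := by positivity
        have hpow : (2⁻¹:ℝ) ^ (k + 3) = (2⁻¹:ℝ) ^ (k + 1) * (2⁻¹:ℝ) ^ 2 := by
          rw [← pow_add]
        nlinarith [mul_pos hδ hx]
  -- summation over k
  have hstep3 : (∑' k : ℕ, ENNReal.ofReal δ * ENNReal.ofReal ((2⁻¹:ℝ) ^ (k + 1))) ≤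
      ENNReal.ofReal δ := by
    have hsplit : ∀ k : ℕ, ENNReal.ofReal δ * ENNReal.ofReal ((2⁻¹:ℝ) ^ (k + 1)) =
        (ENNReal.ofReal δ * ENNReal.ofReal (2⁻¹:ℝ)) * ENNReal.ofReal ((2⁻¹:ℝ) ^ k) := by
      intro k
      rw [mul_assoc]
      congr 1
      rw [← ENNReal.ofReal_mul (by norm_num)]
      congr 1
      rw [pow_succ]
      ring
    rw [tsum_congr hsplit, ENNReal.tsum_mul_left, hQgeom]
    rw [mul_assoc]
    have h1 : ENNReal.ofReal (2⁻¹:ℝ) * 2 = 1 := by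
      rw [ENNReal.ofReal_inv_of_pos (by norm_num), ENNReal.ofReal_ofNat]
      exact ENNReal.inv_mul_cancel (by norm_num) (by simp)
    rw [h1, mul_one]
  -- assemble
  have e : ℕ ≃ ℕ × ℕ := (Denumerable.eqv (ℕ × ℕ)).symm
  refine ⟨fun i => (pt (e i).1 (e i).2).1, fun i => (pt (e i).1 (e i).2).2,
    fun i => rr (e i).1 (e i).2, fun i => hrr0 _ _, ?_, ?_⟩
  · intro p hp
    obtain ⟨k, hk⟩ := hEmem p hp
    have hp1 : p.1 ∈ ⋃ m, S k m := hS1 k ⟨p, hk, rfl⟩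
    rw [Set.mem_iUnion] at hp1
    obtain ⟨j, hj⟩ := hp1
    rw [Set.mem_iUnion]
    refine ⟨e.symm (k, j), ?_⟩
    simp only [Equiv.apply_symm_apply]
    exact hmem k j p hk hj
  · calc (∑' i : ℕ, ENNReal.ofReal (rr (e i).1 (e i).2 ^ β'))
        = ∑' q : ℕ × ℕ, ENNReal.ofReal (rr q.1 q.2 ^ β') :=
          e.tsum_eq (fun q : ℕ × ℕ => ENNReal.ofReal (rr q.1 q.2 ^ β'))
      _ = ∑' k : ℕ, ∑' j : ℕ, ENNReal.ofReal (rr k j ^ β') := (ENNReal.tsum_prod (f := fun k j => ENNReal.ofReal (rr k j ^ β')))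
      _ ≤ ∑' k : ℕ, ∑' j : ℕ,
          (ENNReal.ofReal ((4:ℝ) ^ β') *
              (⨆ _ : (S k j).Nonempty, EMetric.diam (S k j) ^ β'') +
            ENNReal.ofReal (δ * (2⁻¹:ℝ) ^ (k + j + 3))) :=
          ENNReal.tsum_le_tsum fun k => ENNReal.tsum_le_tsum fun j => hcost k j
      _ ≤ ∑' k : ℕ, ENNReal.ofReal δ * ENNReal.ofReal ((2⁻¹:ℝ) ^ (k + 1)) :=
          ENNReal.tsum_le_tsum hstep2
      _ ≤ ENNReal.ofReal δ := hstep3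
end
end
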